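/- In any greedy run on a 2NC-TAP instance, the scaled dual vector (1/H(λ−1))·y is feasible for the dual LP (D): for every link ℓ ∈ L, Σ_{u non-leaf node of T} Σ_{𝒫 ∈ Ptn⊇(comps(T−u)) crossed by ℓ} y(𝒫) ≤ H(λ−1)·cost(ℓ). -/

import Mathlib

open scoped Classical
open Finset

namespace TwoNCTAP

variable {V : Type*}

/-- The graph `H` with the vertex `u` "deleted": all edges incident to `u` are removed,
so that `u` becomes an isolated vertex. -/
def delVert (H : SimpleGraph V) (u : V) : SimpleGraph V where
  Adj a b := H.Adj a b ∧ a ≠ u ∧ b ≠ u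
  symm := ⟨by rintro a b ⟨h, ha, hb⟩; exact ⟨h.symm, hb, ha⟩⟩
  loopless := ⟨by rintro a ⟨h, -, -⟩; exact H.irrefl h⟩

/-- The partition of `V ∖ {u}` into the vertex sets of the connected components of `H − u`. -/
def compPartition (H : SimpleGraph V) (u : V) : Set (Set V) :=
  {S | ∃ v, v ≠ u ∧ S = {w | (delVert H u).Reachable v w}}

/-- `P` is a partition of the set `S`. -/
def IsPartitionOf (P : Set (Set V)) (S : Set V) : Prop :=
  (∀ B ∈ P, B.Nonempty) ∧ (∀ B ∈ P, B ⊆ S) ∧ ∀ v ∈ S, ∃! B : Set V, B ∈ P ∧ v ∈ B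

/-- `P ∈ Ptn⊇(comps(T−u))`: `P` is a partition of `V ∖ {u}` each of whose blocks is a
union of vertex sets of connected components of `T − u`. -/
def PtnSup (T : SimpleGraph V) (u : V) (P : Set (Set V)) : Prop :=
  IsPartitionOf P {v | v ≠ u} ∧ ∀ B ∈ compPartition T u, ∃ C ∈ P, B ⊆ C

/-- An edge `e` crosses the partition `P` if its two endpoints lie in different blocks of `P`. -/
def Crosses (P : Set (Set V)) (e : Sym2 V) : Prop :=
  ∃ v w, e = s(v, w) ∧ ∃ B ∈ P, ∃ C ∈ P, B ≠ C ∧ v ∈ B ∧ w ∈ C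

/-- `u` is a non-leaf node of `T`. -/
def NonLeaf (T : SimpleGraph V) (u : V) : Prop := 1 < (T.neighborSet u).ncard

/-- The links of the instance: the edges of `G` that are not edges of the tree `T`. -/
def links (G T : SimpleGraph V) : Set (Sym2 V) := G.edgeSet \ T.edgeSet

variable [Fintype V]

/-- Feasibility for the partition LP (P) of the 2NC-TAP instance `(G, T, cost)`. -/
def FeasibleP (G T : SimpleGraph V) (x : Sym2 V → ℝ) : Prop :=
  (∀ ℓ ∈ links G T, 0 ≤ x ℓ) ∧
  ∀ u : V, NonLeaf T u → ∀ P : Set (Set V), PtnSup T u P →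
    (P.ncard : ℝ) - 1 ≤
      ∑ ℓ ∈ Finset.univ.filter (fun ℓ : Sym2 V => ℓ ∈ links G T ∧ Crosses P ℓ), x ℓ


/-- The tree `T` together with a set `F` of links added as edges. -/
def withLinks (T : SimpleGraph V) (F : Set (Sym2 V)) : SimpleGraph V :=
  T ⊔ SimpleGraph.fromEdgeSet F

/-- The current partition `𝒫^i_u` (0-indexed): the partition of `V ∖ {u}` into the vertex
sets of the connected components of `(T ∪ {ℓ_0, …, ℓ_{i−1}}) − u`. -/
def curPtn {m : ℕ} (T : SimpleGraph V) (ℓseq : Fin m → Sym2 V) (i : ℕ) (u : V) :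
    Set (Set V) :=
  compPartition (withLinks T {e | ∃ j : Fin m, (j : ℕ) < i ∧ ℓseq j = e}) u

/-- `inc^i(e)`: the set of non-leaf nodes `u` of `T` whose current partition (at the start
of iteration `i`, 0-indexed) is crossed by the link `e`. -/
def incSet {m : ℕ} (T : SimpleGraph V) (ℓseq : Fin m → Sym2 V) (i : ℕ)
    (e : Sym2 V) : Set V :=
  {u | NonLeaf T u ∧ Crosses (curPtn T ℓseq i u) e}

/-- A greedy run on the 2NC-TAP instance `(G, T, cost)`: a sequence of distinct links
`ℓ_0, …, ℓ_{m−1}` such that each `ℓ_i` minimizes the cost-coverage ratio at iteration `i`,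
and at the end every current partition is trivial (i.e. `T` plus the picked links
is 2-node-connected). -/
def IsGreedyRun (G T : SimpleGraph V) (cost : Sym2 V → ℝ) (m : ℕ)
    (ℓseq : Fin m → Sym2 V) : Prop :=
  Function.Injective ℓseq ∧
  (∀ i, ℓseq i ∈ links G T) ∧
  (∀ i : Fin m,
    (incSet T ℓseq (i : ℕ) (ℓseq i)).Nonempty ∧
    ∀ e ∈ links G T, (incSet T ℓseq (i : ℕ) e).Nonempty →
      cost (ℓseq i) / ((incSet T ℓseq (i : ℕ) (ℓseq i)).ncard : ℝ)
        ≤ cost e / ((incSet T ℓseq (i : ℕ) e).ncard : ℝ)) ∧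
  ∀ u : V, NonLeaf T u → curPtn T ℓseq m u = {{v | v ≠ u}}

/-- `ν(u)`: the number of connected components of `T − u`. -/
noncomputable def nblocks (T : SimpleGraph V) (u : V) : ℕ := (compPartition T u).ncard


/-- The `k`-th harmonic number `H(k) = 1 + 1/2 + ⋯ + 1/k`. -/
noncomputable def harm (k : ℕ) : ℝ := ∑ i ∈ Finset.range k, (1 : ℝ) / (i + 1)

/-- The dual values associated with a sequence `w` of assigned weights:
`yOf w 0 = w 0` and `yOf w j = w j − w (j−1)` for `j ≥ 1`. -/
def yOf {k : ℕ} (w : Fin k → ℝ) (j : Fin k) : ℝ :=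
  if (j : ℕ) = 0 then w j
  else w j - w ⟨(j : ℕ) - 1, lt_of_le_of_lt (Nat.sub_le _ _) j.isLt⟩

/-!
Fix a link `ℓ` and let `U` be the non-leaf nodes `u` at which `ℓ` crosses a weighted
partition. These partitions form an initial segment of the merges at `u`, so their `y`-values
telescope to the weight of the last one, assigned at a step `t_u` at which `ℓ` still crosses
the current partition of `u`. By the greedy choice this weight is at most
`cost ℓ / |inc^{t_u}(ℓ)|`, and `inc^{t_u}(ℓ)` contains every `u' ∈ U` with `t_u ≤ t_{u'}`;
ordering `U` by `t` bounds the total by `H(|U|) · cost ℓ`. Finally every `u ∈ U` separates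
the endpoints of `ℓ` in `T`, hence is an inner node of the tree path `T(ℓ)`, so
`|U| ≤ λ - 1`.
-/

theorem delVert_mono {α : Type*} {H H' : SimpleGraph α} (h : H ≤ H') (u : α) :
    delVert H u ≤ delVert H' u := fun _ _ ⟨hab, ha, hb⟩ => ⟨h hab, ha, hb⟩

theorem eq_of_reachable_delVert {α : Type*} {H : SimpleGraph α} {u x : α}
    (h : (delVert H u).Reachable x u) : x = u := by
  obtain ⟨p⟩ := h.symm
  cases p with
  | nil => rfl
  | cons hadj _ => exact absurd rfl hadj.2.1

theorem reachable_delVert_of_notMem_support {α : Type*} {H : SimpleGraph α} {u a b : α}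
    (p : H.Walk a b) (hu : u ∉ p.support) : (delVert H u).Reachable a b := by
  refine ⟨p.transfer _ fun e he => ?_⟩
  induction e using Sym2.ind with
  | _ x y =>
    exact ⟨p.edges_subset_edgeSet he,
      fun h => hu (h ▸ p.fst_mem_support_of_mem_edges he),
      fun h => hu (h ▸ p.snd_mem_support_of_mem_edges he)⟩

theorem crosses_compPartition_iff {α : Type*} (H : SimpleGraph α) (u a b : α) :
    Crosses (compPartition H u) s(a, b) ↔
      a ≠ u ∧ b ≠ u ∧ ¬ (delVert H u).Reachable a b := by
  constructor
  · rintro ⟨v, w, hvw, _, ⟨x, hx, rfl⟩, _, ⟨y, hy, rfl⟩, hxy, hxv, hyw⟩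
    have hvu : v ≠ u := fun h => hx (eq_of_reachable_delVert (h ▸ hxv))
    have hwu : w ≠ u := fun h => hy (eq_of_reachable_delVert (h ▸ hyw))
    have hvw' : ¬ (delVert H u).Reachable v w := fun hr => hxy <| by
      have hxy' : (delVert H u).Reachable x y := ((hxv : _).trans hr).trans (hyw : _).symm
      ext z
      exact ⟨hxy'.symm.trans, hxy'.trans⟩
    rcases Sym2.eq_iff.1 hvw with ⟨rfl, rfl⟩ | ⟨rfl, rfl⟩
    · exact ⟨hvu, hwu, hvw'⟩
    · exact ⟨hwu, hvu, fun hr => hvw' hr.symm⟩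
  · rintro ⟨hau, hbu, hab⟩
    refine ⟨a, b, rfl, _, ⟨a, hau, rfl⟩, _, ⟨b, hbu, rfl⟩, fun h => hab ?_, .rfl, .rfl⟩
    exact (h ▸ SimpleGraph.Reachable.rfl : b ∈ {z | (delVert H u).Reachable a z})

theorem Crosses.compPartition_of_le {α : Type*} {H H' : SimpleGraph α} (hle : H ≤ H') {u : α}
    {e : Sym2 α} (h : Crosses (compPartition H' u) e) : Crosses (compPartition H u) e := by
  induction e using Sym2.ind with
  | _ a b =>
    rw [crosses_compPartition_iff] at h ⊢
    exact ⟨h.1, h.2.1, fun hr => h.2.2 (hr.mono (delVert_mono hle u))⟩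

/-- A link `s(a, b)` crosses the partition of `u` only if `u` is an inner vertex of every
`a`–`b` walk, so these vertices are among the inner vertices of a shortest path. -/
theorem card_filter_crosses_compPartition_le {H : SimpleGraph V} {a b : V}
    (hab : a ≠ b) (hr : H.Reachable a b) :
    #{u | Crosses (compPartition H u) s(a, b)} ≤ H.dist a b - 1 := by
  obtain ⟨p, hp, hlen⟩ := hr.exists_path_of_dist
  have hsub : univ.filter (fun u => Crosses (compPartition H u) s(a, b)) ⊆
      p.support.toFinset \ {a, b} := by
    intro u hu
    obtain ⟨hau, hbu, hnr⟩ := (crosses_compPartition_iff H u a b).1 (mem_filter.1 hu).2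
    simp only [mem_sdiff, List.mem_toFinset, mem_insert, mem_singleton, not_or]
    exact ⟨by_contra fun h => hnr (reachable_delVert_of_notMem_support p h), hau.symm, hbu.symm⟩
  have hends : {a, b} ⊆ p.support.toFinset := by
    simp [insert_subset_iff, p.start_mem_support, p.end_mem_support]
  calc #{u | Crosses (compPartition H u) s(a, b)}
      ≤ #(p.support.toFinset \ {a, b}) := card_le_card hsub
    _ = p.length + 1 - 2 := by
      rw [card_sdiff_of_subset hends, List.toFinset_card_of_nodup hp.support_nodup,
        p.length_support, card_pair hab]
    _ = H.dist a b - 1 := by omega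

theorem antitone_crosses_curPtn {α : Type*} {m : ℕ} (T : SimpleGraph α)
    (ℓseq : Fin m → Sym2 α) (u : α) (e : Sym2 α) :
    Antitone fun i => Crosses (curPtn T ℓseq i u) e := by
  intro i i' hii' h
  refine h.compPartition_of_le (sup_le_sup_left (SimpleGraph.fromEdgeSet_mono ?_) T)
  rintro _ ⟨j, hj, rfl⟩
  exact ⟨j, hj.trans_le hii', rfl⟩

theorem sum_Iic_yOf {k : ℕ} (w : Fin k → ℝ) (t : Fin k) : ∑ j ∈ Iic t, yOf w j = w t := by
  obtain ⟨n, hn⟩ := t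
  induction n with
  | zero =>
    have hIic : Iic (⟨0, hn⟩ : Fin k) = {⟨0, hn⟩} := by
      ext j
      simp [Fin.le_def, Fin.ext_iff]
    rw [hIic, sum_singleton, yOf, if_pos rfl]
  | succ n ih =>
    have hIic : Iic (⟨n + 1, hn⟩ : Fin k) = insert ⟨n + 1, hn⟩ (Iic ⟨n, by omega⟩) := by
      ext j
      simp only [mem_Iic, mem_insert, Fin.le_def, Fin.ext_iff]
      omega
    rw [hIic, sum_insert (by simp [Fin.le_def]), ih (by omega), yOf, if_neg n.succ_ne_zero]
    simp

theorem sum_yOf_filter_of_antitone {k : ℕ} (w : Fin k → ℝ) {p : Fin k → Prop}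
    [DecidablePred p] (hp : Antitone p) (h : (univ.filter p).Nonempty) :
    ∑ j ∈ univ.filter p, yOf w j = w ((univ.filter p).max' h) := by
  have hIic : univ.filter p = Iic ((univ.filter p).max' h) := by
    ext j
    refine ⟨fun hj => mem_Iic.2 (le_max' _ j hj), fun hj => mem_filter.2 ⟨mem_univ j, ?_⟩⟩
    exact hp (mem_Iic.1 hj) (mem_filter.1 (max'_mem _ h)).2
  exact (sum_congr hIic fun _ _ => rfl).trans (sum_Iic_yOf w _)

theorem harm_succ (n : ℕ) : harm (n + 1) = harm n + ((n : ℝ) + 1)⁻¹ := by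
  rw [harm, sum_range_succ, one_div]
  rfl

theorem harm_mono : Monotone harm := fun _ _ h =>
  sum_le_sum_of_subset_of_nonneg (range_subset_range.2 h) fun _ _ _ => by positivity

/-- Order `U` by increasing `g`: the `r`-th element from the top has at least `r` elements
`u'` with `g u ≤ g u'`. -/
theorem sum_inv_card_filter_le_harm {α β : Type*} [DecidableEq α] [LinearOrder β]
    (g : α → β) (U : Finset α) :
    ∑ u ∈ U, (#{u' ∈ U | g u ≤ g u'} : ℝ)⁻¹ ≤ harm #U := by
  induction U using Finset.induction_on_min_value g with
  | empty => simp [harm]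
  | insert a s ha hmin ih =>
    have hall : {u' ∈ insert a s | g a ≤ g u'} = insert a s :=
      filter_true_of_mem fun u' hu' => by
        rcases mem_insert.1 hu' with rfl | hu'
        exacts [le_rfl, hmin u' hu']
    have hrest : ∑ u ∈ s, (#{u' ∈ insert a s | g u ≤ g u'} : ℝ)⁻¹
        ≤ ∑ u ∈ s, (#{u' ∈ s | g u ≤ g u'} : ℝ)⁻¹ := by
      refine sum_le_sum fun u hu => inv_anti₀ ?_ ?_
      · have hself : u ∈ {u' ∈ s | g u ≤ g u'} := mem_filter.2 ⟨hu, le_rfl⟩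
        exact_mod_cast card_pos.2 ⟨u, hself⟩
      · exact_mod_cast card_le_card (filter_subset_filter _ (subset_insert a s))
    rw [sum_insert ha, hall, card_insert_of_notMem ha, harm_succ]
    push_cast
    linarith

theorem sum_le_harm_mul_of_le_div_card {α β : Type*} [DecidableEq α] [LinearOrder β]
    {U : Finset α} (g : α → β) {x : α → ℝ} {c : ℝ} (hc : 0 ≤ c)
    (hx : ∀ u ∈ U, x u ≤ c / #{u' ∈ U | g u ≤ g u'}) :
    ∑ u ∈ U, x u ≤ harm #U * c :=
  calc ∑ u ∈ U, x u ≤ ∑ u ∈ U, c * (#{u' ∈ U | g u ≤ g u'} : ℝ)⁻¹ := sum_le_sum hx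
    _ = c * ∑ u ∈ U, (#{u' ∈ U | g u ≤ g u'} : ℝ)⁻¹ := (mul_sum _ _ _).symm
    _ ≤ c * harm #U := mul_le_mul_of_nonneg_left (sum_inv_card_filter_le_harm g U) hc
    _ = harm #U * c := mul_comm _ _

theorem IsGreedyRun.ratio_le_div_card {G T : SimpleGraph V} {cost : Sym2 V → ℝ} {m : ℕ}
    {ℓseq : Fin m → Sym2 V} (hrun : IsGreedyRun G T cost m ℓseq) {e : Sym2 V}
    (he : e ∈ links G T) (hce : 0 ≤ cost e) (i : Fin m) {S : Finset V} (hS : S.Nonempty)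
    (hSinc : ↑S ⊆ incSet T ℓseq i e) :
    cost (ℓseq i) / (incSet T ℓseq i (ℓseq i)).ncard ≤ cost e / #S := by
  refine ((hrun.2.2.1 i).2 e he (hS.to_set.mono hSinc)).trans ?_
  refine div_le_div_of_nonneg_left hce (by exact_mod_cast hS.card_pos) ?_
  exact_mod_cast (Set.ncard_coe_finset S).symm.trans_le (Set.ncard_le_ncard hSinc)

theorem scaled_dual_feasible_general
    (G T : SimpleGraph V) (hT : T.IsTree)
    (cost : Sym2 V → ℝ) (hcost : ∀ e ∈ links G T, 0 ≤ cost e)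
    (lam : ℕ)
    (hlam : IsGreatest {d : ℕ | ∃ v w : V, s(v, w) ∈ links G T ∧ d = T.dist v w} lam)
    (m : ℕ) (ℓseq : Fin m → Sym2 V) (hrun : IsGreedyRun G T cost m ℓseq)
    (sig : (u : V) → Fin (nblocks T u - 1) → Fin m)
    (hsig : ∀ u : V, NonLeaf T u → StrictMono (sig u) ∧
      ∀ i : Fin m, Crosses (curPtn T ℓseq (i : ℕ) u) (ℓseq i) ↔ ∃ j, sig u j = i)
    (w : (u : V) → Fin (nblocks T u - 1) → ℝ)
    (hw : ∀ (u : V) (j : Fin (nblocks T u - 1)),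
      w u j = cost (ℓseq (sig u j)) /
        ((incSet T ℓseq ((sig u j : Fin m) : ℕ) (ℓseq (sig u j))).ncard : ℝ)) :
    ∀ ℓ ∈ links G T,
      ∑ u ∈ Finset.univ.filter (fun u : V => NonLeaf T u),
        ∑ j ∈ Finset.univ.filter
            (fun j : Fin (nblocks T u - 1) =>
              Crosses (curPtn T ℓseq ((sig u j : Fin m) : ℕ) u) ℓ),
          yOf (w u) j
        ≤ harm (lam - 1) * cost ℓ := by
  intro ℓ hℓ
  set J : (u : V) → Finset (Fin (nblocks T u - 1)) := fun u =>
    univ.filter fun j => Crosses (curPtn T ℓseq ((sig u j : Fin m) : ℕ) u) ℓ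
  set U := (univ.filter fun u : V => NonLeaf T u).filter fun u => (J u).Nonempty
  -- By `hsig`, the crossings of `ℓ` at `u` form an initial segment of the merges at `u`,
  -- so their `y`-values telescope to the weight of the last one.
  have hlast : ∀ u ∈ U, ∃ i, ∃ hi : i < m, Crosses (curPtn T ℓseq i u) ℓ ∧
      ∑ j ∈ J u, yOf (w u) j = cost (ℓseq ⟨i, hi⟩) / (incSet T ℓseq i (ℓseq ⟨i, hi⟩)).ncard := by
    intro u hu
    obtain ⟨hNL, hne⟩ := mem_filter.1 hu
    have hanti := (antitone_crosses_curPtn T ℓseq u ℓ).comp_monotone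
      (Fin.val_strictMono.monotone.comp (hsig u (mem_filter.1 hNL).2).1.monotone)
    exact ⟨_, Fin.isLt _, (mem_filter.1 ((J u).max'_mem hne)).2,
      (sum_yOf_filter_of_antitone (w u) hanti hne).trans (hw u _)⟩
  choose! last hlast_lt hlast_crosses hlast_sum using hlast
  have hUcard : #U ≤ lam - 1 := by
    obtain ⟨a, b, rfl⟩ := Sym2.exists.1 ⟨ℓ, rfl⟩
    refine le_trans (card_le_card fun u hu => mem_filter.2 ⟨mem_univ u, ?_⟩) <|
      (card_filter_crosses_compPartition_le hℓ.1.ne (hT.connected.preconnected a b)).trans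
        (Nat.sub_le_sub_right (hlam.2 ⟨a, b, hℓ, rfl⟩) 1)
    exact (hlast_crosses u hu).compPartition_of_le le_sup_left
  calc _ = ∑ u ∈ U, ∑ j ∈ J u, yOf (w u) j :=
        (sum_filter_of_ne fun u _ h => nonempty_of_sum_ne_zero h).symm
    _ ≤ harm #U * cost ℓ := by
      refine sum_le_harm_mul_of_le_div_card last (hcost ℓ hℓ) fun u hu => ?_
      rw [hlast_sum u hu]
      refine hrun.ratio_le_div_card hℓ (hcost ℓ hℓ) ⟨last u, hlast_lt u hu⟩
        ⟨u, mem_filter.2 ⟨hu, le_rfl⟩⟩ ?_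
      intro u' hu'
      obtain ⟨hu'U, hle⟩ := mem_filter.1 hu'
      exact ⟨(mem_filter.1 (mem_filter.1 hu'U).1).2,
        antitone_crosses_curPtn T ℓseq u' ℓ hle (hlast_crosses u' hu'U)⟩
    _ ≤ harm (lam - 1) * cost ℓ := mul_le_mul_of_nonneg_right (harm_mono hUcard) (hcost ℓ hℓ)

/-- In any greedy run on a 2NC-TAP instance, the scaled dual vector
`(1/H(λ−1))·y` is feasible for the dual LP (D): for every link `ℓ`, the sum over all
non-leaf nodes `u` and all partitions of `u` crossed by `ℓ` of the dual values `y(𝒫)`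
is at most `H(λ−1)·cost(ℓ)`. Here `λ` is the maximum number of edges of a tree path
`T(ℓ')` over all links `ℓ'`, and the (finitely many) partitions of `u` carrying a
nonzero dual value are the hatted partitions `curPtn T ℓseq (sig u j) u`. -/
theorem scaled_dual_feasible
    (G T : SimpleGraph V) (hV : 3 ≤ Fintype.card V) (hTG : T ≤ G) (hT : T.IsTree)
    (cost : Sym2 V → ℝ) (hcost : ∀ e ∈ links G T, 0 ≤ cost e)
    (lam : ℕ)
    (hlam : IsGreatest {d : ℕ | ∃ v w : V, s(v, w) ∈ links G T ∧ d = T.dist v w} lam)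
    (m : ℕ) (ℓseq : Fin m → Sym2 V) (hrun : IsGreedyRun G T cost m ℓseq)
    (sig : (u : V) → Fin (nblocks T u - 1) → Fin m)
    (hsig : ∀ u : V, NonLeaf T u → StrictMono (sig u) ∧
      ∀ i : Fin m, Crosses (curPtn T ℓseq (i : ℕ) u) (ℓseq i) ↔ ∃ j, sig u j = i)
    (w : (u : V) → Fin (nblocks T u - 1) → ℝ)
    (hw : ∀ (u : V) (j : Fin (nblocks T u - 1)),
      w u j = cost (ℓseq (sig u j)) /
        ((incSet T ℓseq ((sig u j : Fin m) : ℕ) (ℓseq (sig u j))).ncard : ℝ)) :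
    ∀ ℓ ∈ links G T,
      ∑ u ∈ Finset.univ.filter (fun u : V => NonLeaf T u),
        ∑ j ∈ Finset.univ.filter
            (fun j : Fin (nblocks T u - 1) =>
              Crosses (curPtn T ℓseq ((sig u j : Fin m) : ℕ) u) ℓ),
          yOf (w u) j
        ≤ harm (lam - 1) * cost ℓ :=
  scaled_dual_feasible_general G T hT cost hcost lam hlam m ℓseq hrun sig hsig w hw

end TwoNCTAP
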